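/- arXiv:1412.3259 — 3 statements merged into one kernel-verified Lean document; each statement's English description precedes it below -/
import Mathlib

section
/- Let X be a compact Hausdorff topological space with a continuous right action of B. Suppose (i) every B-orbit in X is dense, and (ii) there exists u ∈ X whose horocycle orbit {h_s(u) : s ∈ ℝ} is dense in X. Let M be a minimal set for the horocycle flow on X, and assume there exists a real number t₀ > 0 with g_{t₀}(M) = M. Then M = X. (This is the paper's Proposition stated in the setting in which its proof takes place: a compact space with a continuous right B-action; in the paper X is the unit tangent bundle of a minimal compact lamination by hyperbolic surfaces.) -/
/-!
Every element of `B` is `u(s) d(t)`, and `d(t) u(s) = u(s eᵗ) d(t)`, so each `g_t(M)` is again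
closed and `U`-invariant. As `g_{t₀}(M) = M`, the set `g_t(M)` depends on `t` only modulo `t₀`,
hence `⋃ₜ g_t(M) = ⋃_{t ∈ [0, t₀]} g_t(M)` is compact. It contains the `B`-orbit of a point of
`M`, which is dense, so it is all of `X`. The point with dense horocycle orbit thus lies in some
`g_τ(M)`, a closed `U`-invariant set, so `g_τ(M) = X` and `M = X`.
-/

open Matrix Real
open scoped MatrixGroups UpperHalfPlane

/-- The diagonal matrix `d(t)` generating the geodesic flow. -/
noncomputable def dMat (t : ℝ) : SL(2, ℝ) :=
  ⟨!![Real.exp (t / 2), 0; 0, Real.exp (-(t / 2))], by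
    simp [Matrix.det_fin_two_of, ← Real.exp_add]⟩

/-- The unipotent matrix `u(s)` generating the horocycle flow. -/
noncomputable def uMat (s : ℝ) : SL(2, ℝ) :=
  ⟨!![1, s; 0, 1], by simp [Matrix.det_fin_two_of]⟩

/-- The upper-triangular subgroup `B` of `SL(2,ℝ)` with positive diagonal. -/
def Bsub : Subgroup SL(2, ℝ) where
  carrier := {g | g.1 1 0 = 0 ∧ 0 < g.1 0 0}
  one_mem' := by norm_num
  mul_mem' := by
    rintro a b ⟨ha0, ha1⟩ ⟨hb0, hb1⟩
    constructor
    · show (a * b).1 1 0 = 0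
      rw [Matrix.SpecialLinearGroup.coe_mul, Matrix.mul_apply, Fin.sum_univ_two, ha0, hb0]
      ring
    · show 0 < (a * b).1 0 0
      rw [Matrix.SpecialLinearGroup.coe_mul, Matrix.mul_apply, Fin.sum_univ_two, hb0]
      simpa using mul_pos ha1 hb1
  inv_mem' := by
    rintro a ⟨ha0, ha1⟩
    have hdet := a.2
    rw [Matrix.det_fin_two, ha0] at hdet
    constructor
    · show (a⁻¹).1 1 0 = 0
      rw [Matrix.SpecialLinearGroup.SL2_inv_expl]
      simp [ha0]
    · show 0 < (a⁻¹).1 0 0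
      rw [Matrix.SpecialLinearGroup.SL2_inv_expl]
      simp only [Matrix.SpecialLinearGroup.coe_mk]
      show 0 < a.1 1 1
      nlinarith

theorem dMat_mem_B (t : ℝ) : dMat t ∈ Bsub := by
  constructor
  · show (dMat t).1 1 0 = 0
    simp [dMat]
  · show 0 < (dMat t).1 0 0
    simp [dMat, Real.exp_pos]

theorem uMat_mem_B (s : ℝ) : uMat s ∈ Bsub := by
  constructor
  · show (uMat s).1 1 0 = 0
    simp [uMat]
  · show 0 < (uMat s).1 0 0
    simp [uMat]

/-- The matrix topology on `SL(2,ℝ)`, induced from the space of matrices. -/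
instance : TopologicalSpace SL(2, ℝ) :=
  TopologicalSpace.induced (fun g => (g : Matrix (Fin 2) (Fin 2) ℝ)) inferInstance

/-- `d(t)` as an element of the subgroup `B`. -/
noncomputable def dB (t : ℝ) : Bsub := ⟨dMat t, dMat_mem_B t⟩

/-- `u(s)` as an element of the subgroup `B`. -/
noncomputable def uB (s : ℝ) : Bsub := ⟨uMat s, uMat_mem_B s⟩

section

variable {X : Type*} [TopologicalSpace X]

/-- `M` is a minimal set for the horocycle flow: nonempty, closed, invariant under the
horocycle flow, and properly containing no nonempty closed invariant subset. -/
def IsMinimalHoro (act : X → Bsub → X) (M : Set X) : Prop :=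
  M.Nonempty ∧ IsClosed M ∧ (∀ s : ℝ, (fun x => act x (uB s)) '' M = M) ∧
    ∀ M' : Set X, M' ⊆ M → M'.Nonempty → IsClosed M' →
      (∀ s : ℝ, (fun x => act x (uB s)) '' M' = M') → M' = M

end

lemma dMat_add (t t' : ℝ) : dMat t * dMat t' = dMat (t + t') := by
  ext i j
  rw [Matrix.SpecialLinearGroup.coe_mul]
  fin_cases i <;> fin_cases j <;>
    simp [dMat, Matrix.mul_apply, Fin.sum_univ_two, ← Real.exp_add] <;> ring_nf

lemma dMat_mul_uMat (t s : ℝ) : dMat t * uMat s = uMat (s * Real.exp t) * dMat t := by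
  ext i j
  rw [Matrix.SpecialLinearGroup.coe_mul, Matrix.SpecialLinearGroup.coe_mul]
  fin_cases i <;> fin_cases j <;> simp [uMat, dMat, Matrix.mul_apply, Fin.sum_univ_two]
  rw [mul_assoc, ← Real.exp_add]
  ring_nf

lemma dB_add (t t' : ℝ) : dB t * dB t' = dB (t + t') :=
  Subtype.ext (dMat_add t t')

lemma dB_mul_uB (t s : ℝ) : dB t * uB s = uB (s * Real.exp t) * dB t :=
  Subtype.ext (dMat_mul_uMat t s)

lemma dB_zero : dB 0 = 1 := by
  ext i j
  fin_cases i <;> fin_cases j <;> simp [dB, dMat]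

lemma continuous_dB : Continuous dB := by
  refine (Continuous.subtype_mk ?_ _).subtype_mk _
  refine continuous_matrix fun i j => ?_
  fin_cases i <;> fin_cases j <;> simp <;> fun_prop

/-- `b = u(s) d(t)` with `e^{t/2} = b₀₀` and `s = b₀₀ b₀₁`. -/
lemma exists_eq_uB_mul_dB (b : Bsub) : ∃ s t : ℝ, b = uB s * dB t := by
  obtain ⟨h10, h00⟩ := b.2
  have hdet := b.1.2
  rw [Matrix.det_fin_two, h10] at hdet
  refine ⟨b.1.1 0 0 * b.1.1 0 1, 2 * Real.log (b.1.1 0 0), ?_⟩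
  ext i j
  rw [Subgroup.coe_mul, Matrix.SpecialLinearGroup.coe_mul]
  fin_cases i <;> fin_cases j <;>
    simp [uB, dB, uMat, dMat, Matrix.mul_apply, Fin.sum_univ_two, h10, Real.exp_neg,
      Real.exp_log h00]
  · field_simp
  · field_simp
    linear_combination hdet

lemma IsClosed.eq_univ_of_dense_subset {X : Type*} [TopologicalSpace X] {C s : Set X}
    (hC : IsClosed C) (hs : Dense s) (hsC : s ⊆ C) : C = Set.univ := by
  rw [← hC.closure_eq, (hs.mono hsC).closure_eq]

namespace Flow

variable {τ α : Type*} [TopologicalSpace τ] [AddGroup τ] [TopologicalSpace α]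

def setStabilizer (ϕ : Flow τ α) (s : Set α) : AddSubgroup τ where
  carrier := {t | ϕ t '' s = s}
  zero_mem' := by simp [ϕ.map_zero]
  add_mem' {t₁ t₂} (h₁ : ϕ t₁ '' s = s) (h₂ : ϕ t₂ '' s = s) := by
    change ϕ (t₁ + t₂) '' s = s
    rw [show ϕ (t₁ + t₂) = ϕ t₁ ∘ ϕ t₂ from funext (ϕ.map_add t₁ t₂), Set.image_comp, h₂, h₁]
  neg_mem' {t} (h : ϕ t '' s = s) := by
    change ϕ (-t) '' s = s
    rw [ϕ.image_eq_preimage_symm, neg_neg]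
    conv_lhs => rw [← h]
    exact Set.preimage_image_eq s (ϕ.toHomeomorph t).injective

/-- Invariance under `ϕ T` makes `t ↦ ϕ t '' s` `T`-periodic, so one period sweeps out the
whole orbit of `s`. -/
theorem iUnion_image_eq_image_Icc_prod {ϕ : Flow ℝ α} {s : Set α} {T : ℝ} (hT : 0 < T)
    (hs : ϕ T '' s = s) :
    ⋃ t, ϕ t '' s = Function.uncurry ϕ '' (Set.Icc 0 T ×ˢ s) := by
  refine subset_antisymm (Set.iUnion_subset fun t => ?_) ?_
  · rintro _ ⟨x, hx, rfl⟩
    have hn : ϕ (toIcoDiv hT 0 t • T) '' s = s :=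
      zsmul_mem (show T ∈ ϕ.setStabilizer s from hs) _
    refine ⟨(toIcoMod hT 0 t, ϕ (toIcoDiv hT 0 t • T) x),
      ⟨Set.Ico_subset_Icc_self (toIcoMod_mem_Ico' hT t), hn ▸ Set.mem_image_of_mem _ hx⟩, ?_⟩
    rw [Function.uncurry_apply_pair, ← map_add, toIcoMod_add_toIcoDiv_zsmul]
  · rintro _ ⟨⟨t, x⟩, ⟨-, hx⟩, rfl⟩
    exact Set.mem_iUnion_of_mem t (Set.mem_image_of_mem _ hx)

theorem isCompact_iUnion_image {ϕ : Flow ℝ α} {s : Set α} (hs : IsCompact s) {T : ℝ}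
    (hT : 0 < T) (hsT : ϕ T '' s = s) : IsCompact (⋃ t, ϕ t '' s) := by
  rw [iUnion_image_eq_image_Icc_prod hT hsT]
  exact (isCompact_Icc.prod hs).image ϕ.cont'

end Flow

noncomputable def geodesicFlow {X : Type*} [TopologicalSpace X] (act : X → Bsub → X)
    (act_one : ∀ x : X, act x 1 = x)
    (act_mul : ∀ (x : X) (g h : Bsub), act (act x g) h = act x (g * h))
    (act_cont : Continuous fun p : X × Bsub => act p.1 p.2) : Flow ℝ X where
  toFun t x := act x (dB t)
  cont' := act_cont.comp (continuous_snd.prodMk (continuous_dB.comp continuous_fst))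
  map_add' t₁ t₂ x := by rw [act_mul, dB_add, add_comm]
  map_zero' x := by rw [dB_zero, act_one]

section RightAction

variable {X : Type*} {act : X → Bsub → X}

theorem range_act_subset_iUnion_image_dB
    (act_mul : ∀ (x : X) (g h : Bsub), act (act x g) h = act x (g * h)) {M : Set X}
    (hU : ∀ s, Set.MapsTo (fun y => act y (uB s)) M M) {x : X} (hx : x ∈ M) :
    Set.range (act x) ⊆ ⋃ t, (fun y => act y (dB t)) '' M := by
  rintro _ ⟨b, rfl⟩
  obtain ⟨s, t, rfl⟩ := exists_eq_uB_mul_dB b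
  exact Set.mem_iUnion_of_mem t ⟨act x (uB s), hU s hx, act_mul _ _ _⟩

theorem mapsTo_image_dB_of_mapsTo_uB
    (act_mul : ∀ (x : X) (g h : Bsub), act (act x g) h = act x (g * h)) {M : Set X}
    (hU : ∀ s, Set.MapsTo (fun y => act y (uB s)) M M) (t s : ℝ) :
    Set.MapsTo (fun y => act y (uB s)) ((fun y => act y (dB t)) '' M)
      ((fun y => act y (dB t)) '' M) := by
  rintro _ ⟨x, hx, rfl⟩
  refine ⟨act x (uB (s * Real.exp t)), hU _ hx, ?_⟩
  simp only [act_mul, dB_mul_uB]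

end RightAction

/-- Let `X` be a compact Hausdorff space with a continuous right action of `B`.
If every `B`-orbit is dense, some point has a dense horocycle orbit, and `M` is a minimal set of
the horocycle flow which is invariant under `g_{t₀}` for some `t₀ > 0`, then `M = X`. -/
theorem minimal_set_fixed_by_geodesic_time_eq_univ
    {X : Type*} [TopologicalSpace X] [CompactSpace X] [T2Space X]
    (act : X → Bsub → X)
    (act_one : ∀ x : X, act x 1 = x)
    (act_mul : ∀ (x : X) (g h : Bsub), act (act x g) h = act x (g * h))
    (act_cont : Continuous fun p : X × Bsub => act p.1 p.2)
    (hBdense : ∀ x : X, Dense (Set.range (act x)))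
    (htrans : ∃ u : X, Dense (Set.range fun s : ℝ => act u (uB s)))
    (M : Set X) (hM : IsMinimalHoro act M)
    (t₀ : ℝ) (ht₀ : 0 < t₀)
    (hfix : (fun x => act x (dB t₀)) '' M = M) :
    M = Set.univ := by
  obtain ⟨⟨x₀, hx₀⟩, hMc, hMU, -⟩ := hM
  obtain ⟨u, hu⟩ := htrans
  let ϕ := geodesicFlow act act_one act_mul act_cont
  have hU (s : ℝ) : Set.MapsTo (fun x => act x (uB s)) M M :=
    Set.mapsTo_iff_image_subset.2 (hMU s).subset
  have hMsat : ⋃ t, ϕ t '' M = Set.univ :=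
    (ϕ.isCompact_iUnion_image hMc.isCompact ht₀ hfix).isClosed.eq_univ_of_dense_subset
      (hBdense x₀) (range_act_subset_iUnion_image_dB act_mul hU hx₀)
  obtain ⟨τ, hτ⟩ := Set.mem_iUnion.1 (hMsat ▸ Set.mem_univ u)
  have hτM : ϕ τ '' M = Set.univ :=
    (hMc.isCompact.image (ϕ.continuous_toFun τ)).isClosed.eq_univ_of_dense_subset hu
      (Set.range_subset_iff.2 fun s => mapsTo_image_dB_of_mapsTo_uB act_mul hU τ s hτ)
  calc M = ϕ τ ⁻¹' (ϕ τ '' M) := (Set.preimage_image_eq M (ϕ.toHomeomorph τ).injective).symm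
    _ = Set.univ := by rw [hτM, Set.preimage_univ]
end

section
/- Let γ ∈ SL(2,ℝ), let b ≥ 0 and t ≥ 0, and let p ∈ ℍ be the point with Re p = 0 and Im p = exp(t). If dist(p, γ·p) ≤ b, then −log(Im(γ⁻¹·i)) ≤ b. -/
/-!
Write `γ⁻¹ = !![a, b; c, d]`, so that `Im(γ⁻¹·z) = Im z / |c z + d|²`. On the imaginary axis
`z = i y` we have `|c z + d|² = c² y² + d²`, which for `y ≥ 1` is at least `c² + d² = |c i + d|²`.
Hence `Im(γ⁻¹·p) ≤ Im p · Im(γ⁻¹·i)`, while `Im p ≤ Im(γ⁻¹·p) · exp(dist(p, γ⁻¹·p))` holds for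
any two points of `ℍ`. Together, `1 ≤ Im(γ⁻¹·i) · exp(dist(p, γ·p))`.
-/

open Matrix Real
open scoped MatrixGroups UpperHalfPlane

/-- The element `-1` of `SL(2,ℝ)`. -/
def negOne : SL(2, ℝ) := ⟨!![-1, 0; 0, -1], by norm_num [Matrix.det_fin_two_of]⟩

/-- The translation length `ℓ(γ) = inf {dist(z, γ·z) : z ∈ ℍ}`. -/
noncomputable def transLen (γ : SL(2, ℝ)) : ℝ := ⨅ z : ℍ, dist z (γ • z)

/-- The set `{γ·g₀·u(s) : γ ∈ Γ, s ∈ ℝ}`, i.e. the lift to `SL(2,ℝ)` of the horocycle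
orbit of the point `Γg₀` of `Γ\SL(2,ℝ)`. -/
def horoSat (Γ : Subgroup SL(2, ℝ)) (g₀ : SL(2, ℝ)) : Set SL(2, ℝ) :=
  {x | ∃ γ ∈ Γ, ∃ s : ℝ, x = γ * g₀ * uMat s}

/-- The geodesic ray determined by `g`: `r_g(t) = (g·d(t))·i ∈ ℍ`. -/
noncomputable def ray (g : SL(2, ℝ)) (t : ℝ) : ℍ := (g * dMat t) • UpperHalfPlane.I

/-- `Γ` has bounded geometry below `a`: every nontrivial element of `Γ` moves every point
of `ℍ` at distance at least `a`. -/
def BoundedGeomBelow (Γ : Subgroup SL(2, ℝ)) (a : ℝ) : Prop :=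
  ∀ (z : ℍ) (γ : SL(2, ℝ)), γ ∈ Γ → γ ≠ 1 → γ ≠ negOne → a ≤ dist z (γ • z)

/-- The quotient surface `Γ\ℍ` is coarsely tame: it is noncompact and there is `b > 0`
such that every geodesic ray either stays in a compact region of the quotient or meets
closed geodesics of length at most `b` at arbitrarily large times. -/
def CoarselyTame (Γ : Subgroup SL(2, ℝ)) : Prop :=
  (¬ ∃ K : Set ℍ, IsCompact K ∧ ∀ z : ℍ, ∃ γ ∈ Γ, γ • z ∈ K) ∧
    ∃ b > 0, ∀ g : SL(2, ℝ),
      (∃ K : Set ℍ, IsCompact K ∧ ∀ t ≥ (0 : ℝ), ∃ γ ∈ Γ, γ • ray g t ∈ K) ∨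
      (∀ T : ℝ, ∃ t ≥ T, ∃ γ ∈ Γ, γ ≠ 1 ∧ γ ≠ negOne ∧
        dist (ray g t) (γ • ray g t) = transLen γ ∧ transLen γ ≤ b)

namespace UpperHalfPlane

lemma normSq_denom_of_re_eq_zero (g : GL (Fin 2) ℝ) {z : ℍ} (hre : z.re = 0) :
    Complex.normSq (denom g z) = (g 1 0 * z.im) ^ 2 + g 1 1 ^ 2 := by
  simp only [denom, Complex.normSq_apply, Complex.add_re, Complex.add_im, Complex.mul_re,
    Complex.mul_im, Complex.ofReal_re, Complex.ofReal_im, coe_re, coe_im, hre]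
  ring

lemma im_smul_le_im_mul_im_smul_I (g : GL (Fin 2) ℝ) {z : ℍ} (hre : z.re = 0)
    (him : 1 ≤ z.im) : (g • z).im ≤ z.im * (g • I).im := by
  have hI : Complex.normSq (denom g I) = g 1 0 ^ 2 + g 1 1 ^ 2 := by
    simpa using normSq_denom_of_re_eq_zero g (z := I) (by simp)
  have hpos : 0 < g 1 0 ^ 2 + g 1 1 ^ 2 := hI ▸ normSq_denom_pos g (by simp)
  have hle : g 1 0 ^ 2 + g 1 1 ^ 2 ≤ (g 1 0 * z.im) ^ 2 + g 1 1 ^ 2 := by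
    rw [mul_pow]
    gcongr
    exact le_mul_of_one_le_right (sq_nonneg _) (one_le_pow₀ him)
  rw [im_smul_eq_div_normSq, im_smul_eq_div_normSq, normSq_denom_of_re_eq_zero g hre, hI,
    I_im, mul_one, mul_div_assoc', mul_comm z.im]
  gcongr

lemma neg_log_im_smul_I_le_dist (g : GL (Fin 2) ℝ) {z : ℍ} (hre : z.re = 0) (him : 1 ≤ z.im) :
    -Real.log (g • I).im ≤ dist z (g • z) := by
  have h : z.im * 1 ≤ z.im * ((g • I).im * Real.exp (dist z (g • z))) :=
    calc z.im * 1 ≤ (g • z).im * Real.exp (dist z (g • z)) := by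
          simpa using im_le_im_mul_exp_dist z (g • z)
      _ ≤ z.im * (g • I).im * Real.exp (dist z (g • z)) := by
          gcongr
          exact im_smul_le_im_mul_im_smul_I g hre him
      _ = _ := mul_assoc ..
  rw [← Real.log_inv, Real.log_le_iff_le_exp (inv_pos.2 (g • I).im_pos),
    inv_le_iff_one_le_mul₀' (g • I).im_pos]
  exact le_of_mul_le_mul_left h z.im_pos

end UpperHalfPlane

theorem busemann_upper_bound_general (γ : SL(2, ℝ)) (b t : ℝ) (ht : 0 ≤ t)
    (p : ℍ) (hre : p.re = 0) (him : p.im = Real.exp t)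
    (hd : dist p (γ • p) ≤ b) :
    -Real.log ((γ⁻¹ • UpperHalfPlane.I).im) ≤ b := by
  have hdist : dist p ((γ⁻¹ : SL(2, ℝ)) • p) = dist p (γ • p) := by
    rw [← dist_smul γ, smul_inv_smul, dist_comm]
  calc _ ≤ dist p ((γ⁻¹ : SL(2, ℝ)) • p) :=
        UpperHalfPlane.neg_log_im_smul_I_le_dist (γ⁻¹ : SL(2, ℝ)) hre (him ▸ Real.one_le_exp ht)
    _ ≤ b := hdist ▸ hd

/-- **Step 2 of the Key Lemma.** If `p = i·exp(t)` with `t ≥ 0` and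
`dist(p, γ·p) ≤ b` with `b ≥ 0`, then the Busemann cocycle
`B_{γ·∞}(i, γ·i) = −log(Im(γ⁻¹·i))` is at most `b`. -/
theorem busemann_upper_bound (γ : SL(2, ℝ)) (b t : ℝ) (hb : 0 ≤ b) (ht : 0 ≤ t)
    (p : ℍ) (hre : p.re = 0) (him : p.im = Real.exp t)
    (hd : dist p (γ • p) ≤ b) :
    -Real.log ((γ⁻¹ • UpperHalfPlane.I).im) ≤ b :=
  busemann_upper_bound_general γ b t ht p hre him hd
end

section
/- Let (γ_n) be a sequence in SL(2,ℝ) with entries γ_n = [[a_n, b_n], [c_n, d_n]] and let t₀ > 0. Suppose (i) c_n ≠ 0 for all n and |a_n/c_n| → +∞ (the boundary points γ_n·∞ tend to ∞ in ∂ℍ), and (ii) −log(Im(γ_n⁻¹·i)) → t₀. Then there exist real numbers s_n and signs ε_n ∈ {+1, −1} such that ε_n·γ_n·u(s_n) → d(t₀) in SL(2,ℝ). (This is the reduction step of the proof of the Key Lemma: conditions (i) and (ii) force the horocycles γ_n·{Im z = 1} to approach the horocycle {Im z = e^{t₀}}.) -/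
open Matrix Real
open scoped MatrixGroups UpperHalfPlane

/-!
Write `γ = [[a, b], [c, d]]`. Since `Im(γ⁻¹·i) = 1/(a² + c²)`, hypothesis (ii) says that
`a_n² + c_n² → e^{t₀}`; with `|a_n / c_n| → ∞` this forces `c_n → 0` and `|a_n| → e^{t₀/2}`.
Taking `ε_n = sign a_n` and `s_n = -b_n / a_n` kills the upper right entry, and the determinant
condition fixes the lower right one:
`ε_n γ_n u(s_n) = [[|a_n|, 0], [±c_n, 1/|a_n|]] → d(t₀)`.
-/

open Filter Topology

lemma im_smul_I (g : SL(2, ℝ)) :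
    (g • UpperHalfPlane.I).im = (g 1 0 ^ 2 + g 1 1 ^ 2)⁻¹ := by
  have h := UpperHalfPlane.im_smul_eq_div_normSq (SpecialLinearGroup.mapGL ℝ g) UpperHalfPlane.I
  rw [← MulAction.compHom_smul_def] at h
  change (g • UpperHalfPlane.I).im = _ at h
  rw [h]
  simp [UpperHalfPlane.denom, Complex.normSq_apply, sq, add_comm]

lemma im_inv_smul_I (g : SL(2, ℝ)) :
    (g⁻¹ • UpperHalfPlane.I).im = (g 0 0 ^ 2 + g 1 0 ^ 2)⁻¹ := by
  rw [im_smul_I, SpecialLinearGroup.SL2_inv_expl g]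
  simp [add_comm]

lemma exp_neg_log_im_inv_smul_I (g : SL(2, ℝ)) :
    exp (-log (g⁻¹ • UpperHalfPlane.I).im) = g 0 0 ^ 2 + g 1 0 ^ 2 := by
  rw [exp_neg, exp_log (UpperHalfPlane.im_pos _), im_inv_smul_I, inv_inv]

section Limits

variable {ι : Type*} {l : Filter ι}

lemma tendsto_sq_nhds_zero_of_abs_div_tendsto_atTop {x y : ι → ℝ} {L : ℝ}
    (hsum : Tendsto (fun n => x n ^ 2 + y n ^ 2) l (𝓝 L))
    (hdiv : Tendsto (fun n => |x n / y n|) l atTop) :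
    Tendsto (fun n => y n ^ 2) l (𝓝 0) := by
  -- an equality when `y n ≠ 0`, and true at `y n = 0` because `x / 0 = 0`
  have hle : ∀ n, y n ^ 2 ≤ (x n ^ 2 + y n ^ 2) / (1 + |x n / y n| ^ 2) := by
    intro n
    rcases eq_or_ne (y n) 0 with h | h
    · rw [h, zero_pow two_ne_zero]
      positivity
    · rw [le_div_iff₀ (by positivity), sq_abs, div_pow]
      field_simp
      rw [add_comm]
  have hden : Tendsto (fun n => 1 + |x n / y n| ^ 2) l atTop :=
    tendsto_atTop_add_const_left _ _ ((tendsto_pow_atTop two_ne_zero).comp hdiv)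
  exact squeeze_zero (fun n => sq_nonneg _) hle (hsum.div_atTop hden)

lemma tendsto_abs_of_tendsto_sq {x : ι → ℝ} {L : ℝ} (h : Tendsto (fun n => x n ^ 2) l (𝓝 L)) :
    Tendsto (fun n => |x n|) l (𝓝 √L) :=
  ((continuous_sqrt.tendsto L).comp h).congr fun n => sqrt_sq_eq_abs (x n)

lemma tendsto_SL_iff {f : ι → SL(2, ℝ)} {g : SL(2, ℝ)} :
    Tendsto f l (𝓝 g) ↔
      Tendsto (fun n => (f n : Matrix (Fin 2) (Fin 2) ℝ)) l (𝓝 (g : Matrix (Fin 2) (Fin 2) ℝ)) := by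
  rw [nhds_induced, tendsto_comap_iff]
  rfl

end Limits

noncomputable def signSL (x : ℝ) : SL(2, ℝ) := if 0 ≤ x then 1 else negOne

lemma signSL_eq_one_or_negOne (x : ℝ) : signSL x = 1 ∨ signSL x = negOne := by
  unfold signSL
  split_ifs <;> simp

lemma coe_signSL (x : ℝ) :
    (signSL x : Matrix (Fin 2) (Fin 2) ℝ) = if 0 ≤ x then 1 else -1 := by
  unfold signSL
  split_ifs
  · rfl
  · ext i j
    fin_cases i <;> fin_cases j <;> simp [negOne]

lemma coe_signSL_mul_mul_uMat (g : SL(2, ℝ)) (ha : g 0 0 ≠ 0) :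
    ((signSL (g 0 0) * g * uMat (-g 0 1 / g 0 0) : SL(2, ℝ)) : Matrix (Fin 2) (Fin 2) ℝ) =
      !![|g 0 0|, 0; |g 0 0| / g 0 0 * g 1 0, |g 0 0|⁻¹] := by
  have hdet : g 0 0 * g 1 1 - g 0 1 * g 1 0 = 1 := by
    rw [← det_fin_two]
    exact g.det_coe
  have hu : (uMat (-g 0 1 / g 0 0) : Matrix (Fin 2) (Fin 2) ℝ) = !![1, -g 0 1 / g 0 0; 0, 1] :=
    rfl
  rw [Matrix.SpecialLinearGroup.coe_mul, Matrix.SpecialLinearGroup.coe_mul, coe_signSL, hu]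
  rcases le_or_gt 0 (g 0 0) with h | h <;>
    [rw [if_pos h, abs_of_nonneg h]; rw [if_neg h.not_ge, abs_of_neg h]] <;>
    ext i j <;> fin_cases i <;> fin_cases j <;> simp [mul_apply, Fin.sum_univ_two] <;>
    field_simp <;> linarith

lemma tendsto_signSL_mul_mul_uMat {ι : Type*} {l : Filter ι} {g : ι → SL(2, ℝ)} {t : ℝ}
    (ha : Tendsto (fun n => |g n 0 0|) l (𝓝 (exp (t / 2))))
    (hc : Tendsto (fun n => |g n 1 0|) l (𝓝 0)) :
    Tendsto (fun n => signSL (g n 0 0) * g n * uMat (-g n 0 1 / g n 0 0)) l (𝓝 (dMat t)) := by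
  have hne : ∀ᶠ n in l, g n 0 0 ≠ 0 := by
    filter_upwards [ha.eventually_ne (exp_pos _).ne'] with n hn h
    simp [h] at hn
  have hlower : Tendsto (fun n => |g n 0 0| / g n 0 0 * g n 1 0) l (𝓝 0) := by
    refine squeeze_zero_norm (fun n => ?_) hc
    rw [norm_mul, Real.norm_eq_abs, abs_div, abs_abs, Real.norm_eq_abs]
    exact mul_le_of_le_one_left (abs_nonneg _) (div_self_le_one _)
  have hinv : Tendsto (fun n => |g n 0 0|⁻¹) l (𝓝 (exp (-(t / 2)))) := by
    simpa only [exp_neg] using ha.inv₀ (exp_pos _).ne'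
  rw [tendsto_SL_iff]
  refine Tendsto.congr' (hne.mono fun n hn => (coe_signSL_mul_mul_uMat (g n) hn).symm) ?_
  exact (ha.matrixVecCons (tendsto_const_nhds.matrixVecCons tendsto_const_nhds)).matrixVecCons
    ((hlower.matrixVecCons (hinv.matrixVecCons tendsto_const_nhds)).matrixVecCons
      tendsto_const_nhds)

theorem horocycles_converge_general (γ : ℕ → SL(2, ℝ)) (t₀ : ℝ)
    (hinfty : Filter.Tendsto (fun n => |(γ n).1 0 0 / (γ n).1 1 0|)
      Filter.atTop Filter.atTop)
    (hbus : Filter.Tendsto (fun n => -Real.log (((γ n)⁻¹ • UpperHalfPlane.I).im))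
      Filter.atTop (nhds t₀)) :
    ∃ (s : ℕ → ℝ) (ε : ℕ → SL(2, ℝ)), (∀ n, ε n = 1 ∨ ε n = negOne) ∧
      Filter.Tendsto (fun n => ε n * γ n * uMat (s n)) Filter.atTop (nhds (dMat t₀)) := by
  have hsum : Tendsto (fun n => (γ n).1 0 0 ^ 2 + (γ n).1 1 0 ^ 2) atTop (𝓝 (exp t₀)) :=
    ((continuous_exp.tendsto t₀).comp hbus).congr fun n => exp_neg_log_im_inv_smul_I (γ n)
  have hc2 := tendsto_sq_nhds_zero_of_abs_div_tendsto_atTop hsum hinfty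
  have ha2 : Tendsto (fun n => (γ n).1 0 0 ^ 2) atTop (𝓝 (exp t₀)) := by
    simpa using hsum.sub hc2
  refine ⟨_, _, fun n => signSL_eq_one_or_negOne ((γ n).1 0 0), tendsto_signSL_mul_mul_uMat ?_ ?_⟩
  · rw [exp_half]
    exact tendsto_abs_of_tendsto_sq ha2
  · simpa using tendsto_abs_of_tendsto_sq hc2

/-- **reduction step of the Key Lemma.** If `γ_n·∞ = a_n/c_n` tends to
infinity in `∂ℍ` and the Busemann cocycles `−log(Im(γ_n⁻¹·i))` converge to `t₀ > 0`, then
there are times `s_n` and signs `ε_n = ±1` with `ε_n·γ_n·u(s_n) → d(t₀)` in `SL(2,ℝ)`. -/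
theorem horocycles_converge (γ : ℕ → SL(2, ℝ)) (t₀ : ℝ) (ht₀ : 0 < t₀)
    (hc : ∀ n, (γ n).1 1 0 ≠ 0)
    (hinfty : Filter.Tendsto (fun n => |(γ n).1 0 0 / (γ n).1 1 0|)
      Filter.atTop Filter.atTop)
    (hbus : Filter.Tendsto (fun n => -Real.log (((γ n)⁻¹ • UpperHalfPlane.I).im))
      Filter.atTop (nhds t₀)) :
    ∃ (s : ℕ → ℝ) (ε : ℕ → SL(2, ℝ)), (∀ n, ε n = 1 ∨ ε n = negOne) ∧
      Filter.Tendsto (fun n => ε n * γ n * uMat (s n)) Filter.atTop (nhds (dMat t₀)) :=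
  horocycles_converge_general γ t₀ hinfty hbus
end
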